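/- arXiv:2506.07487 — 6 statements merged into one kernel-verified Lean document; each statement's English description precedes it below -/
import Mathlib

section
/- For the pair renewal shift transition matrix A, defined by A(1,n) = A(2,2n) = A(n+1,n) = 1 for all n ≥ 1 and zero otherwise, the sequence of columns of A has exactly two limit points in {0,1}^ℕ: the vector R₁ with (R₁)_j = 1 iff j ∈ {1,2}, and the vector R₂ with (R₂)_j = 1 iff j = 1. -/
/-!
Column `j ≥ 1` of the matrix has a `1` in row `1`, in row `j + 1`, and in row `2` exactly when
`j` is even. The entry in row `j + 1` escapes to infinity, so on every fixed row the columns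
eventually agree with `R₁` (even `j`) or `R₂` (odd `j`). Hence the subsequential limits of the
columns are those of a sequence alternating between `R₁` and `R₂`, namely `R₁` and `R₂`.
-/

open Filter Topology

def subseqLimits {X : Type*} [TopologicalSpace X] (u : ℕ → X) : Set X :=
  {x | ∃ φ : ℕ → ℕ, StrictMono φ ∧ Tendsto (u ∘ φ) atTop (𝓝 x)}

theorem tendsto_pi_congr_of_eventually_eq_discrete {α ι Y : Type*} [TopologicalSpace Y]
    [DiscreteTopology Y] {l : Filter α} {u v : α → ι → Y}
    (h : ∀ i, ∀ᶠ a in l, u a i = v a i) {y : ι → Y} :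
    Tendsto u l (𝓝 y) ↔ Tendsto v l (𝓝 y) := by
  simp only [tendsto_pi_nhds, nhds_discrete, tendsto_pure]
  exact forall_congr' fun i => eventually_congr <| (h i).mono fun a ha => by rw [ha]

theorem subseqLimits_congr_of_eventually_eq_discrete {ι Y : Type*} [TopologicalSpace Y]
    [DiscreteTopology Y] {u v : ℕ → ι → Y} (h : ∀ i, ∀ᶠ n in atTop, u n i = v n i) :
    subseqLimits u = subseqLimits v := by
  ext y
  refine exists_congr fun φ => and_congr_right fun hφ => ?_
  exact tendsto_pi_congr_of_eventually_eq_discrete fun i =>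
    hφ.tendsto_atTop.eventually (p := fun n => u n i = v n i) (h i)

theorem subseqLimits_comp_eq_range {α X : Type*} [Finite α] [TopologicalSpace X] [T1Space X]
    (g : α → X) {p : ℕ → α} (hp : ∀ a, ∃ᶠ n in atTop, p n = a) :
    subseqLimits (g ∘ p) = Set.range g := by
  ext x
  constructor
  · rintro ⟨φ, -, hφ⟩
    exact (Set.finite_range g).isClosed.mem_of_tendsto hφ
      (Eventually.of_forall fun _ => ⟨_, rfl⟩)
  · rintro ⟨a, rfl⟩
    obtain ⟨φ, hφ, hpφ⟩ := extraction_of_frequently_atTop (hp a)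
    refine ⟨φ, hφ, ?_⟩
    simp only [Function.comp_def, hpφ, tendsto_const_nhds]

/-- The limit column `R₁` (for `b = true`) or `R₂` (for `b = false`). -/
def pairRenewalLimit (b : Bool) : ℕ → Bool :=
  fun i => decide (i = 1 ∨ i = 2 ∧ b = true)

theorem pairRenewal_apply_of_le {A : ℕ → ℕ → Bool}
    (hA : ∀ i j, A i j = true ↔
      (1 ≤ j ∧ (i = 1 ∨ i = j + 1 ∨ (i = 2 ∧ ∃ k, 1 ≤ k ∧ j = 2 * k))))
    {i j : ℕ} (hj : 1 ≤ j) (hij : i ≤ j) :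
    A i j = pairRenewalLimit (decide (Even j)) i := by
  have hEven : Even j ↔ ∃ k, 1 ≤ k ∧ j = 2 * k := by
    constructor
    · rintro ⟨k, rfl⟩
      exact ⟨k, by omega, by ring⟩
    · rintro ⟨k, -, rfl⟩
      exact even_two_mul k
  rw [Bool.eq_iff_iff, hA, pairRenewalLimit, decide_eq_true_iff, decide_eq_true_iff, hEven]
  by_cases hj2 : ∃ k, 1 ≤ k ∧ j = 2 * k <;>
    simp only [hj2, and_true, and_false, or_false] <;> omega

/-- For the pair renewal shift transition matrix, the sequence of columns has
exactly two limit points in `{0,1}^ℕ`: `R₁` with `(R₁) j = 1` iff `j ∈ {1,2}`,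
and `R₂` with `(R₂) j = 1` iff `j = 1`. -/
theorem pair_renewal_columns_two_limit_points
    (A : ℕ → ℕ → Bool)
    (hA : ∀ i j, A i j = true ↔
      (1 ≤ j ∧ (i = 1 ∨ i = j + 1 ∨ (i = 2 ∧ ∃ k, 1 ≤ k ∧ j = 2 * k)))) :
    {R : ℕ → Bool | ∃ φ : ℕ → ℕ, StrictMono φ ∧
        Filter.Tendsto (fun k => fun i => A i (φ k + 1)) Filter.atTop (nhds R)}
      = {fun j => decide (j = 1 ∨ j = 2), fun j => decide (j = 1)} := by
  have hcol : ∀ i, ∀ᶠ n in atTop,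
      A i (n + 1) = (pairRenewalLimit ∘ fun n => decide (Even (n + 1))) n i := fun i =>
    (eventually_ge_atTop i).mono fun n hn => pairRenewal_apply_of_le hA (by omega) (by omega)
  have hparity : ∀ b, ∃ᶠ n in atTop, decide (Even (n + 1)) = b := by
    rintro (_ | _)
    · simpa [Nat.even_add_one] using Nat.frequently_even
    · simpa [Nat.even_add_one] using Nat.frequently_odd
  change subseqLimits (fun n i => A i (n + 1)) = _
  rw [subseqLimits_congr_of_eventually_eq_discrete hcol, subseqLimits_comp_eq_range _ hparity,
    Bool.range_eq, Set.pair_comm]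
  congr <;> funext j <;> simp [pairRenewalLimit]
end

section
/- Let e_{β,F} = T_β(∏_{j∈F}Q_j)T_β* with (β,F), (γ,G) admissible pairs where γ is a prefix of β. Then e_{β,F} e_{γ,G} = e_{β,F∪G} if β = γ; e_{β,F} e_{γ,G} = e_{β,F} if β ≠ γ and A(k, β_{|γ|}) = 1 for all k ∈ G; and e_{β,F} e_{γ,G} = 0 otherwise. Consequently, the linear span of the projections e_{β,F} is closed under multiplication. -/
noncomputable section

/-- The countable Markov shift `Σ_A` over alphabet `ℕ` with transition matrix `A`. -/
def SigmaA (A : ℕ → ℕ → Bool) : Type :=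
  {x : ℕ → ℕ // ∀ i, A (x i) (x (i + 1)) = true}

instance : Fact ((1 : ENNReal) ≤ 2) := ⟨one_le_two⟩

/-- The Hilbert space `ℓ²(Σ_A)`. -/
abbrev HilbSA (A : ℕ → ℕ → Bool) := lp (fun _ : SigmaA A => ℂ) 2

noncomputable instance (A : ℕ → ℕ → Bool) : DecidableEq (SigmaA A) :=
  Classical.decEq _

/-- The canonical basis vector `δ_ω` of `ℓ²(Σ_A)`. -/
def deltaVec (A : ℕ → ℕ → Bool) (ω : SigmaA A) : HilbSA A := lp.single 2 ω 1

/-- The sequence `sω` obtained by prepending an admissible symbol `s` to `ω`. -/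
def consSeq (A : ℕ → ℕ → Bool) (s : ℕ) (ω : SigmaA A) (h : A s (ω.1 0) = true) :
    SigmaA A :=
  ⟨fun n => Nat.rec s (fun k _ => ω.1 k) n, by
    intro i
    cases i with
    | zero => exact h
    | succ k => exact ω.2 k⟩

/-- A finite word is admissible when its cylinder in `Σ_A` is non-empty. -/
def AdmissibleWord (A : ℕ → ℕ → Bool) {n : ℕ} (γ : Fin n → ℕ) : Prop :=
  ∃ ω : SigmaA A, ∀ k : Fin n, ω.1 k.1 = γ k

/-- The operator `T_γ = T_{γ₀} ⋯ T_{γ_{n-1}}` associated with a finite word `γ`. -/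
def Tword (A : ℕ → ℕ → Bool) (T : ℕ → HilbSA A →L[ℂ] HilbSA A)
    {n : ℕ} (γ : Fin n → ℕ) : HilbSA A →L[ℂ] HilbSA A :=
  (List.ofFn fun k => T (γ k)).prod

/-- The projection `Q_s = T_s* T_s`. -/
def Qproj (A : ℕ → ℕ → Bool) (T : ℕ → HilbSA A →L[ℂ] HilbSA A) (s : ℕ) :
    HilbSA A →L[ℂ] HilbSA A :=
  ContinuousLinearMap.adjoint (T s) * T s

/-- The product `∏_{j ∈ F} Q_j` over a finite set of symbols. -/
def Qprod (A : ℕ → ℕ → Bool) (T : ℕ → HilbSA A →L[ℂ] HilbSA A) (F : Finset ℕ) :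
    HilbSA A →L[ℂ] HilbSA A :=
  ((F.sort (· ≤ ·)).map (Qproj A T)).prod

/-- The projection `e_{γ,F} = T_γ (∏_{j ∈ F} Q_j) T_γ*`. -/
def eProj (A : ℕ → ℕ → Bool) (T : ℕ → HilbSA A →L[ℂ] HilbSA A)
    {n : ℕ} (γ : Fin n → ℕ) (F : Finset ℕ) : HilbSA A →L[ℂ] HilbSA A :=
  Tword A T γ * Qprod A T F * ContinuousLinearMap.adjoint (Tword A T γ)

/-! Each `e_{β,F}` is diagonal in the basis `(δ_ω)`: it fixes `δ_ω` when `ω ∈ eSet A β F`, i.e.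
when `ω` begins with `β` and `A(j, ω_{|β|}) = 1` for all `j ∈ F`, and kills it otherwise. Products
of these projections are therefore the projections onto intersections of such sets of sequences,
so the three cases are identities between sets of sequences; and when neither word is a prefix of
the other the two sets are disjoint, which gives closure of the span. -/

theorem Submodule.mul_mem_span_of_mul_mem {R B : Type*} [CommSemiring R] [Semiring B]
    [Algebra R B] {S : Set B} (h : ∀ a ∈ S, ∀ b ∈ S, a * b ∈ span R S) {x y : B}
    (hx : x ∈ span R S) (hy : y ∈ span R S) : x * y ∈ span R S := by
  have hxy := Submodule.mul_mem_mul hx hy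
  rw [Submodule.span_mul_span] at hxy
  exact Submodule.span_le.2 (Set.mul_subset_iff.2 h) hxy

namespace SigmaA

variable {A : ℕ → ℕ → Bool}

-- Indexed by `i + n` so that `(ω.drop 1).1 i` reduces to `ω.1 (i + 1)`, matching `consSeq`.
def drop (n : ℕ) (ω : SigmaA A) : SigmaA A :=
  ⟨fun i => ω.1 (i + n), fun i => by simpa only [Nat.add_right_comm] using ω.2 (i + n)⟩

@[simp]
theorem drop_zero (ω : SigmaA A) : ω.drop 0 = ω :=
  rfl

theorem drop_drop_one (n : ℕ) (ω : SigmaA A) : (ω.drop 1).drop n = ω.drop (n + 1) :=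
  Subtype.ext (funext fun i => congrArg ω.1 (by omega))

theorem consSeq_eq_iff {s : ℕ} {ω η : SigmaA A} (h : A s (η.1 0) = true) :
    consSeq A s η h = ω ↔ ω.1 0 = s ∧ ω.drop 1 = η := by
  constructor
  · rintro rfl
    exact ⟨rfl, rfl⟩
  · rintro ⟨h0, rfl⟩
    refine Subtype.ext (funext fun k => ?_)
    cases k with
    | zero => exact h0.symm
    | succ i => rfl

theorem drop_one_consSeq {s : ℕ} {ω : SigmaA A} (h : A s (ω.1 0) = true) :
    (consSeq A s ω h).drop 1 = ω :=
  ((consSeq_eq_iff h).1 rfl).2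

theorem drop_val_zero (n : ℕ) (ω : SigmaA A) : (ω.drop n).1 0 = ω.1 n :=
  congrArg ω.1 (Nat.zero_add n)

theorem consSeq_drop_one (ω : SigmaA A) : consSeq A (ω.1 0) (ω.drop 1) (ω.2 0) = ω :=
  (consSeq_eq_iff _).2 ⟨rfl, rfl⟩

def cylinder (A : ℕ → ℕ → Bool) {n : ℕ} (β : Fin n → ℕ) : Set (SigmaA A) :=
  {ω | ∀ k : Fin n, ω.1 k = β k}

theorem mem_cylinder_succ {n : ℕ} {β : Fin (n + 1) → ℕ} {ω : SigmaA A} :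
    ω ∈ cylinder A β ↔ ω.1 0 = β 0 ∧ ω.drop 1 ∈ cylinder A (Fin.tail β) :=
  Fin.forall_fin_succ

def eSet (A : ℕ → ℕ → Bool) {n : ℕ} (β : Fin n → ℕ) (F : Finset ℕ) :
    Set (SigmaA A) :=
  {ω | ω ∈ cylinder A β ∧ ∀ j ∈ F, A j (ω.1 n) = true}

theorem eSet_inter_eSet {n : ℕ} (β : Fin n → ℕ) (F G : Finset ℕ) :
    eSet A β F ∩ eSet A β G = eSet A β (F ∪ G) := by
  ext ω
  simp only [eSet, Set.mem_inter_iff, Set.mem_ofPred_eq, Finset.mem_union, or_imp, forall_and]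
  tauto

variable {n m : ℕ} {β : Fin n → ℕ} {γ : Fin m → ℕ} {F G : Finset ℕ}

theorem cylinder_subset_of_prefix {hm : m ≤ n}
    (hpre : ∀ k : Fin m, γ k = β (Fin.castLE hm k)) : cylinder A β ⊆ cylinder A γ :=
  fun _ hω k => (hω (Fin.castLE hm k)).trans (hpre k).symm

theorem eSet_subset_eSet_of_prefix {hm : m ≤ n}
    (hpre : ∀ k : Fin m, γ k = β (Fin.castLE hm k)) (hmn : m < n)
    (hG : ∀ k ∈ G, A k (β ⟨m, hmn⟩) = true) : eSet A β F ⊆ eSet A γ G :=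
  fun _ ⟨hω, _⟩ =>
    ⟨cylinder_subset_of_prefix hpre hω, fun k hk => hω ⟨m, hmn⟩ ▸ hG k hk⟩

theorem disjoint_eSet_of_not_forall (hmn : m < n)
    (hG : ¬ ∀ k ∈ G, A k (β ⟨m, hmn⟩) = true) : Disjoint (eSet A β F) (eSet A γ G) :=
  Set.disjoint_left.2 fun _ ⟨hω, _⟩ ⟨_, hωG⟩ =>
    hG fun k hk => hω ⟨m, hmn⟩ ▸ hωG k hk

theorem disjoint_eSet_of_not_prefix {hm : m ≤ n}
    (hpre : ¬ ∀ k : Fin m, γ k = β (Fin.castLE hm k)) : Disjoint (eSet A β F) (eSet A γ G) :=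
  Set.disjoint_left.2 fun _ ⟨hβ, _⟩ ⟨hγ, _⟩ =>
    hpre fun k => (hγ k).symm.trans (hβ (Fin.castLE hm k))

end SigmaA

section Basis

variable {A : ℕ → ℕ → Bool}

theorem ext_deltaVec {E : Type*} [NormedAddCommGroup E] [NormedSpace ℂ E]
    {f g : HilbSA A →L[ℂ] E} (h : ∀ ω, f (deltaVec A ω) = g (deltaVec A ω)) : f = g :=
  lp.ext_continuousLinearMap ENNReal.ofNat_ne_top fun ω => ContinuousLinearMap.ext_ring (h ω)

theorem deltaVec_apply (ω η : SigmaA A) : deltaVec A ω η = if η = ω then 1 else 0 := by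
  simp [deltaVec, lp.single_apply, Pi.single_apply]

theorem inner_deltaVec_left (η : SigmaA A) (x : HilbSA A) :
    inner ℂ (deltaVec A η) x = x η := by
  simp [deltaVec, lp.inner_single_left]

theorem adjoint_apply_eq_inner (f : HilbSA A →L[ℂ] HilbSA A) (x : HilbSA A) (η : SigmaA A) :
    f.adjoint x η = inner ℂ (f (deltaVec A η)) x := by
  rw [← ContinuousLinearMap.adjoint_inner_right, inner_deltaVec_left]

def IsCoordProj (f : HilbSA A →L[ℂ] HilbSA A) (S : Set (SigmaA A)) : Prop :=
  ∀ ω, f (deltaVec A ω) = S.indicator (deltaVec A) ω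

theorem IsCoordProj.unique {f g : HilbSA A →L[ℂ] HilbSA A} {S : Set (SigmaA A)}
    (hf : IsCoordProj f S) (hg : IsCoordProj g S) : f = g :=
  ext_deltaVec fun ω => (hf ω).trans (hg ω).symm

theorem isCoordProj_one : IsCoordProj (1 : HilbSA A →L[ℂ] HilbSA A) Set.univ := fun _ => by
  simp

theorem isCoordProj_zero : IsCoordProj (0 : HilbSA A →L[ℂ] HilbSA A) ∅ := fun _ => by
  simp

theorem IsCoordProj.mul {f g : HilbSA A →L[ℂ] HilbSA A} {S S' : Set (SigmaA A)}
    (hf : IsCoordProj f S) (hg : IsCoordProj g S') : IsCoordProj (f * g) (S ∩ S') := by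
  intro ω
  rw [mul_apply_eq_comp, hg ω, Set.inter_comm, ← Set.indicator_indicator]
  by_cases hS' : ω ∈ S'
  · rw [Set.indicator_of_mem hS', Set.indicator_of_mem hS', hf ω]
  · rw [Set.indicator_of_notMem hS', Set.indicator_of_notMem hS', map_zero]

end Basis

theorem Tword_succ (A : ℕ → ℕ → Bool) (T : ℕ → HilbSA A →L[ℂ] HilbSA A) {n : ℕ}
    (β : Fin (n + 1) → ℕ) : Tword A T β = T (β 0) * Tword A T (Fin.tail β) := by
  simp only [Tword, List.ofFn_succ, List.prod_cons, Fin.tail]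

def eProjSet (A : ℕ → ℕ → Bool) (T : ℕ → HilbSA A →L[ℂ] HilbSA A) :
    Set (HilbSA A →L[ℂ] HilbSA A) :=
  {u | ∃ (n : ℕ) (β : Fin n → ℕ) (F : Finset ℕ),
    AdmissibleWord A β ∧ (n ≠ 0 ∨ F ≠ ∅) ∧ u = eProj A T β F}

def IsShiftFamily (A : ℕ → ℕ → Bool) (T : ℕ → HilbSA A →L[ℂ] HilbSA A) : Prop :=
  ∀ (s : ℕ) (ω : SigmaA A),
    T s (deltaVec A ω) = if h : A s (ω.1 0) = true then deltaVec A (consSeq A s ω h) else 0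

namespace IsShiftFamily

open SigmaA

variable {A : ℕ → ℕ → Bool} {T : ℕ → HilbSA A →L[ℂ] HilbSA A}

theorem adjoint_apply_deltaVec (hT : IsShiftFamily A T) (s : ℕ) (ω : SigmaA A) :
    (T s).adjoint (deltaVec A ω) = if ω.1 0 = s then deltaVec A (ω.drop 1) else 0 := by
  ext η
  rw [adjoint_apply_eq_inner, hT]
  split_ifs with hA h0 h0
  · simp only [inner_deltaVec_left, deltaVec_apply, consSeq_eq_iff hA, h0, true_and,
      eq_comm]
  · simp [inner_deltaVec_left, deltaVec_apply, consSeq_eq_iff hA, h0]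
  · rw [deltaVec_apply, if_neg, inner_zero_left]
    rintro rfl
    exact hA (h0 ▸ ω.2 0)
  · simp

theorem apply_deltaVec_drop_one (hT : IsShiftFamily A T) (ω : SigmaA A) :
    T (ω.1 0) (deltaVec A (ω.drop 1)) = deltaVec A ω :=
  (hT _ _).trans <| (dif_pos (ω.2 0)).trans (congrArg (deltaVec A) (consSeq_drop_one ω))

theorem isCoordProj_qproj (hT : IsShiftFamily A T) (s : ℕ) :
    IsCoordProj (Qproj A T s) {ω | A s (ω.1 0) = true} := by
  intro ω
  rw [Qproj, mul_apply_eq_comp, hT]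
  by_cases hA : A s (ω.1 0) = true
  · rw [dif_pos hA, hT.adjoint_apply_deltaVec,
      if_pos (show (consSeq A s ω hA).1 0 = s from rfl), drop_one_consSeq,
      Set.indicator_of_mem (show ω ∈ {ω : SigmaA A | A s (ω.1 0) = true} from hA)]
  · rw [dif_neg hA, map_zero,
      Set.indicator_of_notMem (show ω ∉ {ω : SigmaA A | A s (ω.1 0) = true} from hA)]

theorem isCoordProj_list_prod_qproj (hT : IsShiftFamily A T) (l : List ℕ) :
    IsCoordProj (l.map (Qproj A T)).prod {ω | ∀ j ∈ l, A j (ω.1 0) = true} := by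
  induction l with
  | nil => simpa using isCoordProj_one
  | cons a l ih =>
    simpa [Set.ofPred_and] using (hT.isCoordProj_qproj a).mul ih

theorem isCoordProj_qprod (hT : IsShiftFamily A T) (F : Finset ℕ) :
    IsCoordProj (Qprod A T F) {ω | ∀ j ∈ F, A j (ω.1 0) = true} := by
  simpa only [Qprod, Finset.mem_sort] using hT.isCoordProj_list_prod_qproj (F.sort (· ≤ ·))

theorem adjoint_Tword_apply_deltaVec (hT : IsShiftFamily A T) {n : ℕ} (β : Fin n → ℕ)
    (ω : SigmaA A) :
    (Tword A T β).adjoint (deltaVec A ω) =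
      (cylinder A β).indicator (fun ω => deltaVec A (ω.drop n)) ω := by
  induction n generalizing ω with
  | zero =>
    simp [Tword, cylinder, ← ContinuousLinearMap.star_eq_adjoint]
  | succ n ih =>
    rw [Tword_succ, ← ContinuousLinearMap.star_eq_adjoint, star_mul, mul_apply_eq_comp,
      ContinuousLinearMap.star_eq_adjoint, ContinuousLinearMap.star_eq_adjoint,
      hT.adjoint_apply_deltaVec]
    by_cases h0 : ω.1 0 = β 0
    · rw [if_pos h0, ih]
      by_cases ht : ω.drop 1 ∈ cylinder A (Fin.tail β)
      · rw [Set.indicator_of_mem ht, Set.indicator_of_mem (mem_cylinder_succ.2 ⟨h0, ht⟩),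
          drop_drop_one]
      · rw [Set.indicator_of_notMem ht,
          Set.indicator_of_notMem (fun h => ht (mem_cylinder_succ.1 h).2)]
    · rw [if_neg h0, map_zero, Set.indicator_of_notMem (fun h => h0 (mem_cylinder_succ.1 h).1)]

theorem Tword_apply_deltaVec_drop (hT : IsShiftFamily A T) {n : ℕ} (β : Fin n → ℕ)
    {ω : SigmaA A} (hω : ω ∈ cylinder A β) :
    Tword A T β (deltaVec A (ω.drop n)) = deltaVec A ω := by
  induction n generalizing ω with
  | zero => simp [Tword]
  | succ n ih =>
    obtain ⟨h0, htail⟩ := mem_cylinder_succ.1 hω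
    rw [Tword_succ, mul_apply_eq_comp, ← drop_drop_one, ih _ htail, ← h0,
      hT.apply_deltaVec_drop_one]

theorem isCoordProj_eProj (hT : IsShiftFamily A T) {n : ℕ} (β : Fin n → ℕ) (F : Finset ℕ) :
    IsCoordProj (eProj A T β F) (eSet A β F) := by
  intro ω
  rw [eProj, mul_apply_eq_comp, mul_apply_eq_comp, hT.adjoint_Tword_apply_deltaVec]
  by_cases hω : ω ∈ cylinder A β
  · rw [Set.indicator_of_mem hω, hT.isCoordProj_qprod]
    have hFn : ω.drop n ∈ {ω : SigmaA A | ∀ j ∈ F, A j (ω.1 0) = true} ↔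
        ∀ j ∈ F, A j (ω.1 n) = true := by
      rw [Set.mem_ofPred_eq, drop_val_zero]
    by_cases hF : ∀ j ∈ F, A j (ω.1 n) = true
    · rw [Set.indicator_of_mem (hFn.2 hF), hT.Tword_apply_deltaVec_drop β hω,
        Set.indicator_of_mem (show ω ∈ eSet A β F from ⟨hω, hF⟩)]
    · rw [Set.indicator_of_notMem (mt hFn.1 hF), map_zero,
        Set.indicator_of_notMem (fun h => hF h.2)]
  · rw [Set.indicator_of_notMem hω, map_zero, map_zero,
      Set.indicator_of_notMem (fun h => hω h.1)]

variable {n m n' : ℕ} {β : Fin n → ℕ} {γ : Fin m → ℕ} {β' : Fin n' → ℕ}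
  {F G F' : Finset ℕ}

theorem eProj_mul_eProj_of_inter_eq (hT : IsShiftFamily A T)
    (h : eSet A β F ∩ eSet A γ G = eSet A β' F') :
    eProj A T β F * eProj A T γ G = eProj A T β' F' :=
  ((hT.isCoordProj_eProj β F).mul (hT.isCoordProj_eProj γ G)).unique
    (h ▸ hT.isCoordProj_eProj β' F')

theorem eProj_mul_eProj_of_disjoint (hT : IsShiftFamily A T)
    (h : Disjoint (eSet A β F) (eSet A γ G)) : eProj A T β F * eProj A T γ G = 0 :=
  ((hT.isCoordProj_eProj β F).mul (hT.isCoordProj_eProj γ G)).unique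
    (h.inter_eq ▸ isCoordProj_zero)

theorem eProj_mul_comm (hT : IsShiftFamily A T) :
    eProj A T β F * eProj A T γ G = eProj A T γ G * eProj A T β F :=
  ((hT.isCoordProj_eProj β F).mul (hT.isCoordProj_eProj γ G)).unique
    (Set.inter_comm (eSet A γ G) _ ▸ (hT.isCoordProj_eProj γ G).mul (hT.isCoordProj_eProj β F))

theorem eProj_mul_eProj_of_prefix (hT : IsShiftFamily A T) (hm : m ≤ n)
    (hpre : ∀ k : Fin m, γ k = β (Fin.castLE hm k)) :
    (n = m → eProj A T β F * eProj A T γ G = eProj A T β (F ∪ G)) ∧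
      (∀ h : m < n, (∀ k ∈ G, A k (β ⟨m, h⟩) = true) →
        eProj A T β F * eProj A T γ G = eProj A T β F) ∧
      (∀ h : m < n, ¬ (∀ k ∈ G, A k (β ⟨m, h⟩) = true) →
        eProj A T β F * eProj A T γ G = 0) := by
  refine ⟨?_, fun hmn hG => ?_, fun hmn hG => ?_⟩
  · rintro rfl
    obtain rfl : γ = β := funext hpre
    exact hT.eProj_mul_eProj_of_inter_eq (eSet_inter_eSet γ F G)
  · exact hT.eProj_mul_eProj_of_inter_eq
      (Set.inter_eq_left.2 (eSet_subset_eSet_of_prefix hpre hmn hG))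
  · exact hT.eProj_mul_eProj_of_disjoint (disjoint_eSet_of_not_forall hmn hG)

theorem eProj_mul_eProj_mem_span_of_le (hT : IsShiftFamily A T) (hβ : AdmissibleWord A β)
    (hF : n ≠ 0 ∨ F ≠ ∅) (hm : m ≤ n) :
    eProj A T β F * eProj A T γ G ∈ Submodule.span ℂ (eProjSet A T) := by
  have mem_span : ∀ {F'}, (n ≠ 0 ∨ F' ≠ ∅) →
      eProj A T β F' ∈ Submodule.span ℂ (eProjSet A T) :=
    fun h => Submodule.subset_span ⟨n, β, _, hβ, h, rfl⟩
  by_cases hpre : ∀ k : Fin m, γ k = β (Fin.castLE hm k)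
  · obtain ⟨h_eq, h_le, h_zero⟩ := hT.eProj_mul_eProj_of_prefix (F := F) (G := G) hm hpre
    rcases hm.eq_or_lt with rfl | hmn
    · rw [h_eq rfl]
      exact mem_span (hF.imp_right fun hF h => hF (Finset.union_eq_empty.1 h).1)
    · by_cases hβG : ∀ k ∈ G, A k (β ⟨m, hmn⟩) = true
      · rw [h_le hmn hβG]
        exact mem_span hF
      · rw [h_zero hmn hβG]
        exact zero_mem _
  · rw [hT.eProj_mul_eProj_of_disjoint
      (disjoint_eSet_of_not_prefix (F := F) (G := G) hpre)]
    exact zero_mem _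

theorem mul_mem_span_eProjSet (hT : IsShiftFamily A T) {u v : HilbSA A →L[ℂ] HilbSA A}
    (hu : u ∈ eProjSet A T) (hv : v ∈ eProjSet A T) :
    u * v ∈ Submodule.span ℂ (eProjSet A T) := by
  obtain ⟨n, β, F, hβ, hF, rfl⟩ := hu
  obtain ⟨m, γ, G, hγ, hG, rfl⟩ := hv
  rcases le_total m n with hm | hn
  · exact hT.eProj_mul_eProj_mem_span_of_le hβ hF hm
  · rw [hT.eProj_mul_comm]
    exact hT.eProj_mul_eProj_mem_span_of_le hγ hG hn

end IsShiftFamily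

/-- Products of the projections `e_{β,F}` when `γ` is a prefix of `β`:
`e_{β,F} e_{γ,G} = e_{β,F∪G}` if `β = γ`; `e_{β,F} e_{γ,G} = e_{β,F}` if
`β ≠ γ` and `A(k, β_{|γ|}) = 1` for all `k ∈ G`; and `0` otherwise.
Consequently the linear span of the projections `e_{β,F}` is closed under
multiplication. -/
theorem eProj_mul_eProj (A : ℕ → ℕ → Bool)
    (T : ℕ → HilbSA A →L[ℂ] HilbSA A)
    (hT : ∀ (s : ℕ) (ω : SigmaA A),
      T s (deltaVec A ω) =
        if h : A s (ω.1 0) = true then deltaVec A (consSeq A s ω h) else 0) :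
    (∀ (n m : ℕ) (β : Fin n → ℕ) (γ : Fin m → ℕ) (F G : Finset ℕ),
      AdmissibleWord A β → AdmissibleWord A γ →
      (n ≠ 0 ∨ F ≠ ∅) → (m ≠ 0 ∨ G ≠ ∅) →
      ∀ hm : m ≤ n, (∀ k : Fin m, γ k = β (Fin.castLE hm k)) →
        ((n = m → eProj A T β F * eProj A T γ G = eProj A T β (F ∪ G)) ∧
         (∀ h : m < n, (∀ k ∈ G, A k (β ⟨m, h⟩) = true) →
            eProj A T β F * eProj A T γ G = eProj A T β F) ∧
         (∀ h : m < n, ¬ (∀ k ∈ G, A k (β ⟨m, h⟩) = true) →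
            eProj A T β F * eProj A T γ G = 0))) ∧
    (∀ x ∈ Submodule.span ℂ
        {u : HilbSA A →L[ℂ] HilbSA A | ∃ (n : ℕ) (β : Fin n → ℕ) (F : Finset ℕ),
          AdmissibleWord A β ∧ (n ≠ 0 ∨ F ≠ ∅) ∧ u = eProj A T β F},
      ∀ y ∈ Submodule.span ℂ
        {u : HilbSA A →L[ℂ] HilbSA A | ∃ (n : ℕ) (β : Fin n → ℕ) (F : Finset ℕ),
          AdmissibleWord A β ∧ (n ≠ 0 ∨ F ≠ ∅) ∧ u = eProj A T β F},
      x * y ∈ Submodule.span ℂ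
        {u : HilbSA A →L[ℂ] HilbSA A | ∃ (n : ℕ) (β : Fin n → ℕ) (F : Finset ℕ),
          AdmissibleWord A β ∧ (n ≠ 0 ∨ F ≠ ∅) ∧ u = eProj A T β F}) := by
  have hT : IsShiftFamily A T := hT
  exact ⟨fun _ _ _ _ _ _ _ _ _ _ hm hpre => hT.eProj_mul_eProj_of_prefix hm hpre,
    fun _ hx _ hy => Submodule.mul_mem_span_of_mul_mem
      (fun _ hu _ hv => hT.mul_mem_span_eProjSet hu hv) hx hy⟩
end
end

section
/- Suppose A is a transition matrix over ℕ such that the full space X_A is compact. Then a sequence (ξⁿ) in X_A \ E_A has all of its limit points in the set E_A of empty-stem configurations if and only if the first symbol of the stem of ξⁿ tends to infinity, i.e. κ(ξⁿ)₀ → ∞. -/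
/-! Evaluation at a generator is a continuous map into the discrete space `Bool`, so along a
sequence in the compact set `X` it is eventually `false` exactly when it is `false` at every
subsequential limit: otherwise a subsequence where it is `true` has, by sequential compactness
(`FreeGroup ℕ` is countable, so `FreeGroup ℕ → Bool` is first countable), a further convergent
subsequence along which it is eventually `true`. Finitely many generators at a time then give
`κ(ξⁿ)₀ → ∞`. -/

open Filter Topology

section SubsequentialLimits

variable {α β : Type*} [TopologicalSpace α] [TopologicalSpace β] {u : ℕ → α} {f : α → β}

theorem eq_of_tendsto_of_eventually_apply_eq [T2Space β] {l : Filter ℕ} [l.NeBot] {R : α} {b : β}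
    (hf : Continuous f) (hlim : Tendsto u l (𝓝 R)) (h : ∀ᶠ n in l, f (u n) = b) : f R = b :=
  tendsto_nhds_unique ((hf.tendsto R).comp hlim) (tendsto_nhds_of_eventually_eq h)

theorem eventually_apply_eq_of_tendsto [DiscreteTopology β] {l : Filter ℕ} {R : α}
    (hf : Continuous f) (hlim : Tendsto u l (𝓝 R)) : ∀ᶠ n in l, f (u n) = f R :=
  (hf.tendsto R).comp hlim (isOpen_discrete {f R} |>.mem_nhds rfl)

theorem forall_subseq_limit_apply_eq_iff_eventually [FirstCountableTopology α]
    [DiscreteTopology β] {X : Set α} (hX : IsCompact X) (hu : ∀ n, u n ∈ X)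
    (hf : Continuous f) (b : β) :
    (∀ R, (∃ φ : ℕ → ℕ, StrictMono φ ∧ Tendsto (u ∘ φ) atTop (𝓝 R)) → f R = b) ↔
      ∀ᶠ n in atTop, f (u n) = b := by
  refine ⟨fun h => ?_, fun h R ⟨φ, hφ, hlim⟩ =>
    eq_of_tendsto_of_eventually_apply_eq hf hlim (hφ.tendsto_atTop.eventually h)⟩
  by_contra hne
  obtain ⟨φ₁, hφ₁, hφ₁b⟩ := extraction_of_frequently_atTop (not_eventually.mp hne)
  obtain ⟨R, -, φ₂, hφ₂, hlim⟩ := hX.tendsto_subseq fun k => hu (φ₁ k)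
  have hRb : f R = b := h R ⟨φ₁ ∘ φ₂, hφ₁.comp hφ₂, hlim⟩
  obtain ⟨k, hk⟩ := (eventually_apply_eq_of_tendsto hf hlim).exists
  exact hφ₁b (φ₂ k) (hk.trans hRb)

end SubsequentialLimits

theorem limit_points_in_empty_stems_iff_general
    (X : Set (FreeGroup ℕ → Bool)) (hX : IsCompact X)
    (ξ : ℕ → FreeGroup ℕ → Bool)
    (hmem : ∀ n, ξ n ∈ X) :
    (∀ R : FreeGroup ℕ → Bool,
        (∃ φ : ℕ → ℕ, StrictMono φ ∧
          Filter.Tendsto (fun k => ξ (φ k)) Filter.atTop (nhds R)) →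
        (R ∈ X ∧ ∀ s : ℕ, R (FreeGroup.of s) = false))
      ↔ (∀ N : ℕ, ∀ᶠ n in Filter.atTop,
          ∀ s ≤ N, ξ n (FreeGroup.of s) = false) := by
  have hcoord (s : ℕ) := forall_subseq_limit_apply_eq_iff_eventually hX hmem
    (continuous_apply (FreeGroup.of s)) false
  have hfinite (N : ℕ) := (Set.finite_le_nat N).eventually_all
    (l := atTop) (p := fun s n => ξ n (FreeGroup.of s) = false)
  constructor
  · intro h N
    exact (hfinite N).mpr fun s _ => (hcoord s).mp fun R hR => (h R hR).2 s
  · rintro h R ⟨φ, hφ, hlim⟩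
    refine ⟨hX.isClosed.mem_of_tendsto hlim (.of_forall fun k => hmem (φ k)), fun s => ?_⟩
    exact (hcoord s).mpr ((h s).mono fun n hn => hn s le_rfl) R ⟨φ, hφ, hlim⟩

/-- If the generalized Markov shift `X_A` (modeled as a compact set of
configurations on the Cayley tree of the free group on ℕ) is compact, then a
sequence in `X_A \ E_A` has all of its limit points in the set `E_A` of
empty-stem configurations if and only if the first symbol of the stem tends to
infinity (no bounded generator is eventually filled). -/
theorem limit_points_in_empty_stems_iff
    (A : ℕ → ℕ → Bool)
    (X : Set (FreeGroup ℕ → Bool)) (hX : IsCompact X)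
    (ξ : ℕ → FreeGroup ℕ → Bool)
    (hmem : ∀ n, ξ n ∈ X)
    (hnotE : ∀ n, ∃ s : ℕ, ξ n (FreeGroup.of s) = true) :
    (∀ R : FreeGroup ℕ → Bool,
        (∃ φ : ℕ → ℕ, StrictMono φ ∧
          Filter.Tendsto (fun k => ξ (φ k)) Filter.atTop (nhds R)) →
        (R ∈ X ∧ ∀ s : ℕ, R (FreeGroup.of s) = false))
      ↔ (∀ N : ℕ, ∀ᶠ n in Filter.atTop,
          ∀ s ≤ N, ξ n (FreeGroup.of s) = false) :=
  limit_points_in_empty_stems_iff_general X hX ξ hmem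
end

section
/- Suppose A is irreducible and column-finite (each column has finitely many 1's), X_A is compact, and the shift map σ extends continuously to all of X_A. Then the set E_A of empty-word configurations is forward invariant: σ(E_A) ⊆ E_A. -/
/-!
Suppose `ξ ∈ E_A` but `σ ξ` fills some generator `s`. By continuity, and density of `Σ_A`,
there are infinite-stem `η` arbitrarily close to `ξ` with `σ η` filling `s`; since
`σ η g = η (x₀ g)` for the first stem letter `x₀` of `η`, this forces `A(x₀, s) = 1`.
Column-finiteness leaves only finitely many such `x₀`, and `ξ` has an open neighbourhood
on which none of them is filled, a contradiction.
-/

open Filter Topology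

/-- The positive word `x₀x₁⋯x_{n-1}` in the free group on ℕ determined by the
first `n` entries of a sequence `x`. -/
def wordOf (x : ℕ → ℕ) (n : ℕ) : FreeGroup ℕ :=
  (List.ofFn fun k : Fin n => FreeGroup.of (x k)).prod

lemma wordOf_one (x : ℕ → ℕ) : wordOf x 1 = FreeGroup.of (x 0) := by
  simp [wordOf]

lemma isOpen_setOf_forall_mem_apply_eq {ι κ α : Type*} [TopologicalSpace α]
    [DiscreteTopology α] {S : Set ι} (hS : S.Finite) (g : ι → κ) (a : α) :
    IsOpen {η : κ → α | ∀ i ∈ S, η (g i) = a} := by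
  simpa only [Set.ofPred_forall, Set.preimage, Set.mem_singleton_iff] using
    hS.isOpen_biInter fun i _ =>
      (continuous_apply (A := fun _ => α) (g i)).isOpen_preimage {a} (isOpen_discrete _)

lemma ContinuousOn.exists_mem_nhds_of_mem_closure {α β : Type*} [TopologicalSpace α]
    [TopologicalSpace β] {f : α → β} {X D : Set α} (hf : ContinuousOn f X) (hDX : D ⊆ X)
    {x : α} (hxD : x ∈ closure D) (hxX : x ∈ X) {U : Set α} {V : Set β}
    (hU : U ∈ 𝓝 x) (hV : V ∈ 𝓝 (f x)) : ∃ y ∈ D, y ∈ U ∧ f y ∈ V := by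
  have := mem_closure_iff_nhdsWithin_neBot.mp hxD
  have hU' : ∀ᶠ y in 𝓝[D] x, y ∈ U := mem_nhdsWithin_of_mem_nhds hU
  have hV' : ∀ᶠ y in 𝓝[D] x, f y ∈ V := nhdsWithin_mono x hDX (hf x hxX hV)
  have hD : ∀ᶠ y in 𝓝[D] x, y ∈ D := self_mem_nhdsWithin
  exact (hD.and (hU'.and hV')).exists

theorem empty_words_forward_invariant_general
    (A : ℕ → ℕ → Bool)
    -- A column-finite
    (hcf : ∀ j, {i | A i j = true}.Finite)
    (X : Set (FreeGroup ℕ → Bool))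
    -- filled positive words are admissible and connected (rules R2, R4)
    (h3 : ∀ ξ ∈ X, ∀ s t : ℕ,
        ξ (FreeGroup.of s * FreeGroup.of t) = true →
        ξ (FreeGroup.of s) = true ∧ A s t = true)
    -- the infinite-stem configurations Σ_A are dense in X_A
    (hdense : X ⊆ closure {η | η ∈ X ∧ ∃ x : ℕ → ℕ,
        (∀ i, A (x i) (x (i + 1)) = true) ∧ ∀ n, η (wordOf x n) = true})
    (sigma : (FreeGroup ℕ → Bool) → (FreeGroup ℕ → Bool))
    -- σ is the shift on configurations with nonempty stem
    (hsig : ∀ ξ ∈ X, ∀ s : ℕ, ξ (FreeGroup.of s) = true →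
        ∀ g, sigma ξ g = ξ (FreeGroup.of s * g))
    -- σ extends continuously to all of X_A
    (hcont : ContinuousOn sigma X) (hmaps : Set.MapsTo sigma X X) :
    Set.MapsTo sigma
      {ξ | ξ ∈ X ∧ ∀ s : ℕ, ξ (FreeGroup.of s) = false}
      {ξ | ξ ∈ X ∧ ∀ s : ℕ, ξ (FreeGroup.of s) = false} := by
  rintro ξ ⟨hξX, hξE⟩
  refine ⟨hmaps hξX, fun s => ?_⟩
  by_contra hs
  rw [Bool.not_eq_false] at hs
  -- Column-finiteness makes "no generator that can precede `s` is filled" an open condition.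
  have hU := (isOpen_setOf_forall_mem_apply_eq (hcf s) FreeGroup.of false).mem_nhds
    fun i _ => hξE i
  have hV : {ζ : FreeGroup ℕ → Bool | ζ (FreeGroup.of s) = true} ∈ 𝓝 (sigma ξ) :=
    ((continuous_apply (A := fun _ => Bool) _).isOpen_preimage {true}
      (isOpen_discrete _)).mem_nhds hs
  obtain ⟨η, ⟨hηX, x, -, hx⟩, hηU, hηV⟩ :=
    hcont.exists_mem_nhds_of_mem_closure (fun _ h => h.1) (hdense hξX) hξX hU hV
  have hx₀ : η (FreeGroup.of (x 0)) = true := wordOf_one x ▸ hx 1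
  have hηV' : η (FreeGroup.of (x 0) * FreeGroup.of s) = true := hsig η hηX _ hx₀ _ ▸ hηV
  have hA : A (x 0) s = true := (h3 η hηX _ _ hηV').2
  simp [hηU (x 0) hA] at hx₀

/-- If `A` is irreducible and column-finite, `X_A` is compact and the shift map
extends continuously to all of `X_A`, then the set `E_A` of empty-word
configurations is forward invariant: `σ(E_A) ⊆ E_A`. -/
theorem empty_words_forward_invariant
    (A : ℕ → ℕ → Bool)
    -- A irreducible
    (hirr : ∀ i j, 1 ≤ i → 1 ≤ j →
      ∃ (n : ℕ) (w : Fin (n + 1) → ℕ), w 0 = i ∧ w (Fin.last n) = j ∧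
        ∀ k : Fin n, A (w k.castSucc) (w k.succ) = true)
    -- A column-finite
    (hcf : ∀ j, {i | A i j = true}.Finite)
    (X : Set (FreeGroup ℕ → Bool)) (hX : IsCompact X)
    -- at most one filled generator (rule R3 at the root)
    (h1 : ∀ ξ ∈ X, ∀ s t : ℕ, ξ (FreeGroup.of s) = true →
        ξ (FreeGroup.of t) = true → s = t)
    -- at most one filled continuation at the second level
    (h2 : ∀ ξ ∈ X, ∀ s t t' : ℕ,
        ξ (FreeGroup.of s * FreeGroup.of t) = true →
        ξ (FreeGroup.of s * FreeGroup.of t') = true → t = t')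
    -- filled positive words are admissible and connected (rules R2, R4)
    (h3 : ∀ ξ ∈ X, ∀ s t : ℕ,
        ξ (FreeGroup.of s * FreeGroup.of t) = true →
        ξ (FreeGroup.of s) = true ∧ A s t = true)
    -- the infinite-stem configurations Σ_A are dense in X_A
    (hdense : X ⊆ closure {η | η ∈ X ∧ ∃ x : ℕ → ℕ,
        (∀ i, A (x i) (x (i + 1)) = true) ∧ ∀ n, η (wordOf x n) = true})
    (sigma : (FreeGroup ℕ → Bool) → (FreeGroup ℕ → Bool))
    -- σ is the shift on configurations with nonempty stem
    (hsig : ∀ ξ ∈ X, ∀ s : ℕ, ξ (FreeGroup.of s) = true →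
        ∀ g, sigma ξ g = ξ (FreeGroup.of s * g))
    -- σ extends continuously to all of X_A
    (hcont : ContinuousOn sigma X) (hmaps : Set.MapsTo sigma X X) :
    Set.MapsTo sigma
      {ξ | ξ ∈ X ∧ ∀ s : ℕ, ξ (FreeGroup.of s) = false}
      {ξ | ξ ∈ X ∧ ∀ s : ℕ, ξ (FreeGroup.of s) = false} :=
  empty_words_forward_invariant_general A hcf X h3 hdense sigma hsig hcont hmaps
end

section
/- Let X_A belong to the single empty-word class: A irreducible and column-finite, X_A compact, and E_A = {ξ⁰} a singleton. Then the extension of the shift map σ to X_A defined by σ(ξ⁰) = ξ⁰ is continuous on X_A. -/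
/-!
Away from the empty-stem configuration `ξ⁰` the shift is, locally, the translation
`ζ ↦ ζ (s * ·)` by the first stem letter `s`, hence continuous. At `ξ⁰` we use compactness:
it suffices that every cluster point of `σ` at `ξ⁰` has empty stem. By column-finiteness only
finitely many letters `s` can precede a given letter `t`, and near `ξ⁰` none of them is filled,
so `σ ζ` has `t` unfilled; thus every cluster point has empty stem and equals `ξ⁰`.
-/

open Filter Topology FreeGroup

lemma eventually_apply_eq {G : Type*} (ξ : G → Bool) (a : G) : ∀ᶠ ζ in 𝓝 ξ, ζ a = ξ a :=
  (continuous_apply a).continuousAt.eventually_mem ((isOpen_discrete {ξ a}).mem_nhds rfl)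

lemma continuousWithinAt_of_eq_translate {G : Type*} [Mul G] {X : Set (G → Bool)}
    {sigma : (G → Bool) → G → Bool} {ξ : G → Bool} {a : G}
    (hsig : ∀ ζ ∈ X, ζ a = true → ∀ g, sigma ζ g = ζ (a * g)) (hξ : ξ ∈ X) (ha : ξ a = true) :
    ContinuousWithinAt sigma X ξ := by
  have htranslate : Continuous fun ζ : G → Bool => fun g => ζ (a * g) :=
    continuous_pi fun g => continuous_apply (a * g)
  have hfilled : ∀ᶠ ζ in 𝓝[X] ξ, ζ a = true :=
    ha ▸ nhdsWithin_le_nhds (eventually_apply_eq ξ a)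
  refine htranslate.continuousWithinAt.congr_of_eventuallyEq ?_ (funext (hsig ξ hξ ha))
  filter_upwards [hfilled, self_mem_nhdsWithin] with ζ hζa hζ
  exact funext (hsig ζ hζ hζa)

section EmptyWord

variable {A : ℕ → ℕ → Bool} {X : Set (FreeGroup ℕ → Bool)}
  {sigma : (FreeGroup ℕ → Bool) → FreeGroup ℕ → Bool}

lemma shift_apply_eq_false_of_column
    (hadm : ∀ ζ ∈ X, ∀ s u : ℕ, ζ (of s * of u) = true → A s u = true)
    (hsig : ∀ ζ ∈ X, ∀ s : ℕ, ζ (of s) = true → ∀ g, sigma ζ g = ζ (of s * g))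
    {ζ : FreeGroup ℕ → Bool} (hζ : ζ ∈ X) {s t : ℕ} (hs : ζ (of s) = true)
    (hcol : ∀ i, A i t = true → ζ (of i) = false) :
    sigma ζ (of t) = false := by
  rw [hsig ζ hζ s hs, Bool.eq_false_iff]
  intro hst
  simp [hcol s (hadm ζ hζ s t hst)] at hs

lemma eventually_shift_apply_eq_false {ξ0 : FreeGroup ℕ → Bool} (t : ℕ)
    (hcf : {i | A i t = true}.Finite)
    (hadm : ∀ ζ ∈ X, ∀ s u : ℕ, ζ (of s * of u) = true → A s u = true)
    (hsig : ∀ ζ ∈ X, ∀ s : ℕ, ζ (of s) = true → ∀ g, sigma ζ g = ζ (of s * g))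
    (hE : {ξ | ξ ∈ X ∧ ∀ s : ℕ, ξ (of s) = false} = {ξ0}) (hfix : sigma ξ0 = ξ0) :
    ∀ᶠ ζ in 𝓝[X] ξ0, sigma ζ (of t) = false := by
  have hξ0 : ξ0 ∈ X ∧ ∀ s : ℕ, ξ0 (of s) = false := hE.symm.subset rfl
  have hcol : ∀ᶠ ζ in 𝓝 ξ0, ∀ i ∈ {i | A i t = true}, ζ (of i) = false :=
    hcf.eventually_all.2 fun i _ => hξ0.2 i ▸ eventually_apply_eq ξ0 (of i)
  filter_upwards [nhdsWithin_le_nhds hcol, self_mem_nhdsWithin] with ζ hζcol hζ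
  by_cases hstem : ∃ s, ζ (of s) = true
  · obtain ⟨s, hs⟩ := hstem
    exact shift_apply_eq_false_of_column hadm hsig hζ hs hζcol
  · obtain rfl : ζ = ξ0 := hE.subset ⟨hζ, by simpa using hstem⟩
    rw [hfix, hξ0.2]

end EmptyWord

theorem single_empty_word_shift_continuous_general
    (A : ℕ → ℕ → Bool)
    -- A column-finite
    (hcf : ∀ j, {i | A i j = true}.Finite)
    (X : Set (FreeGroup ℕ → Bool)) (hX : IsCompact X)
    -- filled positive words are admissible and connected (rules R2, R4)
    (h3 : ∀ ξ ∈ X, ∀ s t : ℕ,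
        ξ (FreeGroup.of s * FreeGroup.of t) = true →
        ξ (FreeGroup.of s) = true ∧ A s t = true)
    -- E_A is a singleton {ξ⁰}
    (ξ0 : FreeGroup ℕ → Bool)
    (hE : {ξ | ξ ∈ X ∧ ∀ s : ℕ, ξ (FreeGroup.of s) = false} = {ξ0})
    (sigma : (FreeGroup ℕ → Bool) → (FreeGroup ℕ → Bool))
    -- σ is the shift on configurations with nonempty stem
    (hsig : ∀ ξ ∈ X, ∀ s : ℕ, ξ (FreeGroup.of s) = true →
        ∀ g, sigma ξ g = ξ (FreeGroup.of s * g))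
    (hmaps : Set.MapsTo sigma X X)
    -- the extension fixes the empty word
    (hfix : sigma ξ0 = ξ0) :
    ContinuousOn sigma X := by
  have hadm : ∀ ζ ∈ X, ∀ s u : ℕ, ζ (of s * of u) = true → A s u = true :=
    fun ζ hζ s u hsu => (h3 ζ hζ s u hsu).2
  have hempty : ∀ ζ ∈ X, (∀ s : ℕ, ζ (of s) = false) → ζ = ξ0 :=
    fun ζ hζ hstem => hE.subset ⟨hζ, hstem⟩
  intro ξ hξ
  by_cases hstem : ∃ s, ξ (of s) = true
  · obtain ⟨s, hs⟩ := hstem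
    exact continuousWithinAt_of_eq_translate (fun ζ hζ => hsig ζ hζ s) hξ hs
  obtain rfl : ξ = ξ0 := hempty ξ hξ (by simpa using hstem)
  rw [ContinuousWithinAt, hfix]
  refine hX.tendsto_nhds_of_unique_mapClusterPt
    (eventually_mem_nhdsWithin.mono fun ζ hζ => hmaps hζ) fun η hη hcluster => ?_
  refine hempty η hη fun t => ?_
  exact (isClosed_eq (continuous_apply _) continuous_const).mem_of_mapClusterPt hcluster
    (eventually_shift_apply_eq_false t (hcf t) hadm hsig hE hfix)

/-- Single empty-word class: if `A` is irreducible and column-finite, `X_A` is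
compact and the set of empty-stem configurations is a singleton `{ξ⁰}`, then
the extension of the shift map to `X_A` defined by `σ(ξ⁰) = ξ⁰` is
continuous on `X_A`. -/
theorem single_empty_word_shift_continuous
    (A : ℕ → ℕ → Bool)
    -- A irreducible
    (hirr : ∀ i j, 1 ≤ i → 1 ≤ j →
      ∃ (n : ℕ) (w : Fin (n + 1) → ℕ), w 0 = i ∧ w (Fin.last n) = j ∧
        ∀ k : Fin n, A (w k.castSucc) (w k.succ) = true)
    -- A column-finite
    (hcf : ∀ j, {i | A i j = true}.Finite)
    (X : Set (FreeGroup ℕ → Bool)) (hX : IsCompact X)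
    -- at most one filled generator and continuation (rule R3)
    (h1 : ∀ ξ ∈ X, ∀ s t : ℕ, ξ (FreeGroup.of s) = true →
        ξ (FreeGroup.of t) = true → s = t)
    (h2 : ∀ ξ ∈ X, ∀ s t t' : ℕ,
        ξ (FreeGroup.of s * FreeGroup.of t) = true →
        ξ (FreeGroup.of s * FreeGroup.of t') = true → t = t')
    -- filled positive words are admissible and connected (rules R2, R4)
    (h3 : ∀ ξ ∈ X, ∀ s t : ℕ,
        ξ (FreeGroup.of s * FreeGroup.of t) = true →
        ξ (FreeGroup.of s) = true ∧ A s t = true)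
    -- E_A is a singleton {ξ⁰}
    (ξ0 : FreeGroup ℕ → Bool)
    (hE : {ξ | ξ ∈ X ∧ ∀ s : ℕ, ξ (FreeGroup.of s) = false} = {ξ0})
    (sigma : (FreeGroup ℕ → Bool) → (FreeGroup ℕ → Bool))
    -- σ is the shift on configurations with nonempty stem
    (hsig : ∀ ξ ∈ X, ∀ s : ℕ, ξ (FreeGroup.of s) = true →
        ∀ g, sigma ξ g = ξ (FreeGroup.of s * g))
    (hmaps : Set.MapsTo sigma X X)
    -- the extension fixes the empty word
    (hfix : sigma ξ0 = ξ0) :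
    ContinuousOn sigma X :=
  single_empty_word_shift_continuous_general A hcf X hX h3 ξ0 hE sigma hsig hmaps hfix
end

section
/- Let A be a column-finite irreducible transition matrix whose generalized shift X_A is compact and whose shift σ extends continuously to X_A with σ(Σ_A) ⊆ Σ_A and σ(E_A) ⊆ E_A, where X_A = Σ_A ⊔ F_A ⊔ E_A and every point of F_A eventually maps into E_A. Then every σ-invariant Borel probability measure ν on X_A gives full measure to Σ_A ∪ E_A, and can be written as ν = λμ + (1−λ)ν̃ with λ ∈ [0,1], μ a σ-invariant probability on Σ_A, and ν̃ a σ-invariant probability on E_A. -/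
/-!
Since `σ` maps `E_A` into itself, the preimages `σ⁻ⁿ E_A` increase, and by invariance they all
have the measure of `E_A`; their union contains `F_A` and exceeds `E_A` only by a null set, so
`ν(F_A) = 0`. The decomposition is the law of total probability for the invariant set `Σ_A`:
conditioning an invariant measure on an invariant set, or on its complement, gives an invariant
measure, and the complement of `Σ_A` carries its mass on `E_A`.
-/

open MeasureTheory ProbabilityTheory Set

namespace MeasureTheory

variable {α : Type*} [MeasurableSpace α] {μ : Measure α} {f : α → α} {s : Set α}

theorem measurePreserving_of_measure_preimage (hf : Measurable f)
    (h : ∀ s, MeasurableSet s → μ (f ⁻¹' s) = μ s) : MeasurePreserving f μ μ :=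
  ⟨hf, Measure.ext fun s hs => by rw [Measure.map_apply hf hs, h s hs]⟩

theorem MeasurePreserving.cond_of_preimage_eq (hf : MeasurePreserving f μ μ)
    (hs : MeasurableSet s) (hfs : f ⁻¹' s = s) : MeasurePreserving f μ[|s] μ[|s] := by
  have h := hf.restrict_preimage hs
  rw [hfs] at h
  exact h.smul_measure _

theorem smul_cond_eq_restrict [IsFiniteMeasure μ] (s : Set α) :
    μ s • μ[|s] = μ.restrict s := by
  rcases eq_or_ne (μ s) 0 with hs | hs
  · simp [hs, Measure.restrict_eq_zero.2 hs]
  · rw [ProbabilityTheory.cond, smul_smul, ENNReal.mul_inv_cancel hs (measure_ne_top μ s),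
      one_smul]

theorem smul_cond_add_smul_cond_compl [IsFiniteMeasure μ] (hs : MeasurableSet s) :
    μ s • μ[|s] + μ sᶜ • μ[|sᶜ] = μ := by
  rw [smul_cond_eq_restrict, smul_cond_eq_restrict, Measure.restrict_add_restrict_compl hs]

theorem MeasurePreserving.measure_iUnion_preimage_iterate
    (hf : MeasurePreserving f μ μ) (hs : MeasurableSet s) (hfs : MapsTo f s s) :
    μ (⋃ n, f^[n] ⁻¹' s) = μ s := by
  have hmono : Monotone fun n => f^[n] ⁻¹' s := by
    refine monotone_nat_of_le_succ fun n x hx => ?_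
    rw [mem_preimage, Function.iterate_succ_apply']
    exact hfs hx
  simp only [hmono.measure_iUnion, (hf.iterate _).measure_preimage hs.nullMeasurableSet,
    ciSup_const]

theorem MeasurePreserving.measure_iUnion_preimage_iterate_sdiff [IsFiniteMeasure μ]
    (hf : MeasurePreserving f μ μ) (hs : MeasurableSet s) (hfs : MapsTo f s s) :
    μ ((⋃ n, f^[n] ⁻¹' s) \ s) = 0 := by
  have hsub : s ⊆ ⋃ n, f^[n] ⁻¹' s := subset_iUnion_of_subset 0 subset_rfl
  rw [measure_sdiff hsub hs.nullMeasurableSet (measure_ne_top μ s),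
    hf.measure_iUnion_preimage_iterate hs hfs, tsub_self]

end MeasureTheory

theorem invariant_measure_decomposition_general
    (X : Type*) [TopologicalSpace X]
    [MeasurableSpace X] [BorelSpace X]
    (σ : X → X) (hσ : Continuous σ)
    (SA FA EA : Set X)
    (hmS : MeasurableSet SA) (hmE : MeasurableSet EA)
    (hcover : SA ∪ FA ∪ EA = Set.univ)
    (hSE : Disjoint SA EA) (hFE : Disjoint FA EA)
    (hSinv : σ ⁻¹' SA = SA)
    (hEmap : Set.MapsTo σ EA EA)
    (hFmap : ∀ x ∈ FA, ∃ n : ℕ, σ^[n] x ∈ EA)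
    (ν : Measure X) (hprob : IsProbabilityMeasure ν)
    (hinv : ∀ B, MeasurableSet B → ν (σ ⁻¹' B) = ν B) :
    ν (SA ∪ EA) = 1 ∧
    ∃ (l : ENNReal) (μ ν' : Measure X), l ≤ 1 ∧
      ν = l • μ + (1 - l) • ν' ∧
      (l ≠ 0 → IsProbabilityMeasure μ ∧
        (∀ B, MeasurableSet B → μ (σ ⁻¹' B) = μ B) ∧ μ SA = 1) ∧
      (l ≠ 1 → IsProbabilityMeasure ν' ∧
        (∀ B, MeasurableSet B → ν' (σ ⁻¹' B) = ν' B) ∧ ν' EA = 1) := by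
  have hσν := measurePreserving_of_measure_preimage hσ.measurable hinv
  have hFA : ν FA = 0 := by
    refine measure_mono_null (fun x hx => ?_) (hσν.measure_iUnion_preimage_iterate_sdiff hmE hEmap)
    exact ⟨mem_iUnion.2 (hFmap x hx), hFE.notMem_of_mem_left hx⟩
  have hSEc : (SA ∪ EA)ᶜ ⊆ FA := compl_subset_iff_union.2 (by rwa [union_right_comm])
  have hSc : SAᶜ \ FA = EA := Subset.antisymm
    (sdiff_subset_iff.2 (compl_subset_iff_union.2 (by rwa [← union_assoc])))
    (subset_sdiff.2 ⟨hSE.subset_compl_left, hFE.symm⟩)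
  have hσS : MeasurePreserving σ ν[|SA] ν[|SA] := hσν.cond_of_preimage_eq hmS hSinv
  have hσSc : MeasurePreserving σ ν[|SAᶜ] ν[|SAᶜ] :=
    hσν.cond_of_preimage_eq hmS.compl (by rw [preimage_compl, hSinv])
  refine ⟨(prob_compl_eq_zero_iff (hmS.union hmE)).1 (measure_mono_null hSEc hFA),
    ν SA, ν[|SA], ν[|SAᶜ], prob_le_one, ?_,
    fun h => ⟨cond_isProbabilityMeasure h, fun B hB => hσS.measure_preimage hB.nullMeasurableSet,
      cond_apply_self h (measure_ne_top ν SA)⟩, fun h => ?_⟩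
  · rw [← prob_compl_eq_one_sub hmS, smul_cond_add_smul_cond_compl hmS]
  · have hSAc : ν SAᶜ ≠ 0 := by rwa [Ne, prob_compl_eq_zero_iff hmS]
    refine ⟨cond_isProbabilityMeasure hSAc,
      fun B hB => hσSc.measure_preimage hB.nullMeasurableSet, ?_⟩
    rw [cond_apply hmS.compl, ← hSc, inter_eq_right.2 sdiff_subset, measure_sdiff_null hFA,
      ENNReal.inv_mul_cancel hSAc (measure_ne_top ν _)]

/-- For a compact generalized Markov shift `X_A = Σ_A ⊔ F_A ⊔ E_A` with a
continuous extended shift `σ`, every `σ`-invariant Borel probability measure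
gives full measure to `Σ_A ∪ E_A` and decomposes as
`ν = λ·μ + (1−λ)·ν̃` with `μ` an invariant probability on `Σ_A` and `ν̃` an
invariant probability on `E_A`. -/
theorem invariant_measure_decomposition
    (X : Type*) [TopologicalSpace X] [CompactSpace X]
    [TopologicalSpace.MetrizableSpace X]
    [MeasurableSpace X] [BorelSpace X]
    (σ : X → X) (hσ : Continuous σ)
    (SA FA EA : Set X)
    (hmS : MeasurableSet SA) (hmF : MeasurableSet FA) (hmE : MeasurableSet EA)
    (hcover : SA ∪ FA ∪ EA = Set.univ)
    (hSF : Disjoint SA FA) (hSE : Disjoint SA EA) (hFE : Disjoint FA EA)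
    (hEfin : EA.Finite)
    (hSinv : σ ⁻¹' SA = SA)
    (hEmap : Set.MapsTo σ EA EA)
    (hFmap : ∀ x ∈ FA, ∃ n : ℕ, σ^[n] x ∈ EA)
    (ν : Measure X) (hprob : IsProbabilityMeasure ν)
    (hinv : ∀ B, MeasurableSet B → ν (σ ⁻¹' B) = ν B) :
    ν (SA ∪ EA) = 1 ∧
    ∃ (l : ENNReal) (μ ν' : Measure X), l ≤ 1 ∧
      ν = l • μ + (1 - l) • ν' ∧
      (l ≠ 0 → IsProbabilityMeasure μ ∧
        (∀ B, MeasurableSet B → μ (σ ⁻¹' B) = μ B) ∧ μ SA = 1) ∧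
      (l ≠ 1 → IsProbabilityMeasure ν' ∧
        (∀ B, MeasurableSet B → ν' (σ ⁻¹' B) = ν' B) ∧ ν' EA = 1) :=
  invariant_measure_decomposition_general X σ hσ SA FA EA hmS hmE hcover hSE hFE hSinv hEmap hFmap ν
    hprob hinv
end
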